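/- arXiv:1509.02067 — 3 statements merged into one kernel-verified Lean document; each statement's English description precedes it below -/
import Mathlib

section
/- Edge-isoperimetric inequality for the hypercube: for any subset A of the vertices of the hypercube Q_n, the number of edges of Q_n with both endpoints in A is at most (1/2)·|A|·log₂|A|. -/
/-- The hypercube graph `Q_n` on vertex set `{0,1}^n`. -/
def cube (n : ℕ) : SimpleGraph (Fin n → Bool) :=
  SimpleGraph.fromRel (fun x y => (Finset.univ.filter (fun i => x i ≠ y i)).card = 1)

/-!
Count ordered pairs of adjacent vertices of `A`, i.e. twice the edges, and induct on `n`.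
Splitting `A ⊆ Q_{n+1}` by the first coordinate into `A₀, A₁ ⊆ Q_n`, the pairs inside `A` are
those inside `A₀`, those inside `A₁`, and the two orientations of `(0, x) ~ (1, x)` for
`x ∈ A₀ ∩ A₁`. So it suffices that `a log a + b log b + 2 min(a, b) ≤ (a + b) log (a + b)` in
base 2. For `a ≤ b` and `t = a / (a + b) ≤ 1/2` this is `H(t) ≥ 2 t log 2`, the chord bound for
the concave binary entropy `H` between `0` and `1/2`.
-/

open Finset Real

namespace SimpleGraph

variable {V : Type*} (G : SimpleGraph V) [DecidableRel G.Adj]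

theorem card_interedges_eq_sum (s t : Finset V) :
    #(G.interedges s t) = ∑ x ∈ s, ∑ y ∈ t, if G.Adj x y then 1 else 0 := by
  rw [interedges_def, card_filter, sum_product]

variable [DecidableEq V]

theorem coe_image_interedges_self (A : Finset V) :
    ((G.interedges A A).image Sym2.mk.uncurry : Set (Sym2 V)) =
      {e ∈ G.edgeSet | ∀ x ∈ e, x ∈ A} := by
  ext e
  induction e using Sym2.ind with
  | _ x y =>
    simp only [coe_image, Set.mem_image, mem_coe, Prod.exists, Set.mem_ofPred_eq, mem_edgeSet,
      Sym2.mem_iff, forall_eq_or_imp, forall_eq, mem_interedges_iff, Sym2.eq_iff,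
      Function.uncurry_apply_pair]
    constructor
    · rintro ⟨a, b, ⟨ha, hb, hab⟩, ⟨rfl, rfl⟩ | ⟨rfl, rfl⟩⟩
      · exact ⟨hab, ha, hb⟩
      · exact ⟨hab.symm, hb, ha⟩
    · rintro ⟨hxy, hx, hy⟩
      exact ⟨x, y, ⟨hx, hy, hxy⟩, .inl ⟨rfl, rfl⟩⟩

theorem two_mul_ncard_edges_within (A : Finset V) :
    2 * {e ∈ G.edgeSet | ∀ x ∈ e, x ∈ A}.ncard = #(G.interedges A A) := by
  rw [← coe_image_interedges_self, Set.ncard_coe_finset, card_eq_sum_card_image Sym2.mk.uncurry,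
    sum_const_nat (Sym2.ind _), mul_comm]
  intro x y hxy
  rw [← mem_coe, coe_image_interedges_self] at hxy
  obtain ⟨hadj, hx, hy⟩ : G.Adj x y ∧ x ∈ A ∧ y ∈ A := by simpa using hxy
  have hfiber :
      {p ∈ G.interedges A A | Function.uncurry Sym2.mk p = s(x, y)} = {(x, y), (y, x)} := by
    ext ⟨a, b⟩
    simp only [mem_filter, mem_interedges_iff, Function.uncurry_apply_pair, Sym2.eq_iff,
      mem_insert, mem_singleton, Prod.mk.injEq]
    constructor
    · rintro ⟨-, h⟩
      exact h
    · rintro (⟨rfl, rfl⟩ | ⟨rfl, rfl⟩)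
      · exact ⟨⟨hx, hy, hadj⟩, .inl ⟨rfl, rfl⟩⟩
      · exact ⟨⟨hy, hx, hadj.symm⟩, .inr ⟨rfl, rfl⟩⟩
  rw [hfiber, card_pair]
  simp [hadj.ne]

end SimpleGraph

namespace Finset

theorem sum_sum_ite_eq_card_inter {α : Type*} [DecidableEq α] (s t : Finset α) :
    ∑ x ∈ s, ∑ y ∈ t, (if x = y then 1 else 0) = #(s ∩ t) := by
  rw [← filter_mem_eq_inter, card_filter]
  exact sum_congr rfl fun x _ => sum_ite_eq t x fun _ => 1

variable {n : ℕ} {β : Type*}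

noncomputable def consPreimage (b : β) (A : Finset (Fin (n + 1) → β)) : Finset (Fin n → β) :=
  A.preimage (Fin.cons (α := fun _ => β) b) (Fin.cons_right_injective (α := fun _ => β) b).injOn

@[simp]
theorem mem_consPreimage {b : β} {A : Finset (Fin (n + 1) → β)} {x : Fin n → β} :
    x ∈ A.consPreimage b ↔ Fin.cons b x ∈ A :=
  mem_preimage

theorem filter_apply_zero_eq_map_consPreimage [DecidableEq β] (A : Finset (Fin (n + 1) → β))
    (b : β) :
    A.filter (· 0 = b) =
      (A.consPreimage b).map ⟨Fin.cons b, Fin.cons_right_injective (α := fun _ => β) b⟩ := by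
  ext y
  rw [mem_filter, mem_map]
  constructor
  · rintro ⟨hy, rfl⟩
    exact ⟨Fin.tail y, by simpa [Fin.cons_self_tail] using hy, Fin.cons_self_tail y⟩
  · rintro ⟨x, hx, rfl⟩
    exact ⟨mem_consPreimage.1 hx, rfl⟩

variable [Fintype β] [DecidableEq β]

theorem sum_eq_sum_sum_consPreimage {M : Type*} [AddCommMonoid M]
    (A : Finset (Fin (n + 1) → β)) (f : (Fin (n + 1) → β) → M) :
    ∑ x ∈ A, f x = ∑ b, ∑ x ∈ A.consPreimage b, f (Fin.cons b x) := by
  rw [← sum_fiberwise A (· 0)]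
  simp_rw [filter_apply_zero_eq_map_consPreimage, sum_map]
  rfl

theorem card_eq_sum_card_consPreimage (A : Finset (Fin (n + 1) → β)) :
    #A = ∑ b, #(A.consPreimage b) := by
  simp only [card_eq_sum_ones, sum_eq_sum_sum_consPreimage A]

end Finset

theorem hammingDist_cons {n : ℕ} {β : Fin (n + 1) → Type*} [∀ i, DecidableEq (β i)]
    (a b : β 0) (x y : ∀ i : Fin n, β i.succ) :
    hammingDist (Fin.cons a x : ∀ i, β i) (Fin.cons b y) =
      hammingDist x y + if a = b then 0 else 1 := by
  simp only [hammingDist, card_filter, Fin.sum_univ_succ, Fin.cons_zero, Fin.cons_succ]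
  split_ifs <;> simp_all [add_comm]

section Cube

variable {n : ℕ}

theorem cube_adj_iff {x y : Fin n → Bool} : (cube n).Adj x y ↔ hammingDist x y = 1 := by
  rw [cube, SimpleGraph.fromRel_adj, ← hammingDist, ← hammingDist, hammingDist_comm y, or_self,
    and_iff_right_iff_imp]
  rintro h rfl
  simp at h

instance : DecidableRel (cube n).Adj := fun _ _ => decidable_of_iff _ cube_adj_iff.symm

theorem cube_adj_cons_cons_self (b : Bool) (x y : Fin n → Bool) :
    (cube (n + 1)).Adj (Fin.cons b x) (Fin.cons b y) ↔ (cube n).Adj x y := by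
  simp [cube_adj_iff, hammingDist_cons]

theorem cube_adj_cons_cons_of_ne {b c : Bool} (h : b ≠ c) (x y : Fin n → Bool) :
    (cube (n + 1)).Adj (Fin.cons b x) (Fin.cons c y) ↔ x = y := by
  simp [cube_adj_iff, hammingDist_cons, h]

theorem card_interedges_cube_succ (A : Finset (Fin (n + 1) → Bool)) :
    #((cube (n + 1)).interedges A A) =
      #((cube n).interedges (A.consPreimage false) (A.consPreimage false)) +
      #((cube n).interedges (A.consPreimage true) (A.consPreimage true)) +
      2 * #(A.consPreimage false ∩ A.consPreimage true) := by
  simp only [SimpleGraph.card_interedges_eq_sum, sum_eq_sum_sum_consPreimage A, Fintype.sum_bool,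
    sum_add_distrib, cube_adj_cons_cons_self, cube_adj_cons_cons_of_ne (by decide : true ≠ false),
    cube_adj_cons_cons_of_ne (by decide : false ≠ true), sum_sum_ite_eq_card_inter,
    inter_comm (A.consPreimage true)]
  ring

end Cube

namespace Real

theorem two_mul_mul_log_two_le_binEntropy {t : ℝ} (ht₀ : 0 ≤ t) (ht : t ≤ 2⁻¹) :
    2 * t * log 2 ≤ binEntropy t := by
  have hchord := strictConcave_binEntropy.concaveOn.2 (Set.left_mem_Icc.2 zero_le_one)
    (show (2⁻¹ : ℝ) ∈ Set.Icc 0 1 by norm_num) (show 0 ≤ 1 - 2 * t by linarith)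
    (show 0 ≤ 2 * t by linarith) (by ring)
  simp only [smul_eq_mul, binEntropy_zero, binEntropy_two_inv, mul_zero, zero_add] at hchord
  rwa [show 2 * t * 2⁻¹ = t by ring] at hchord

theorem mul_binEntropy_div_add (a b : ℝ) :
    (a + b) * binEntropy (a / (a + b)) = negMulLog a + negMulLog b - negMulLog (a + b) := by
  rcases eq_or_ne (a + b) 0 with hs | hs
  · rw [hs, show b = -a by linarith]
    simp [negMulLog, log_neg_eq_log]
  have hscale (x : ℝ) :
      negMulLog x = (a + b) * negMulLog (x / (a + b)) + x / (a + b) * negMulLog (a + b) := by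
    rw [← negMulLog_mul, div_mul_cancel₀ _ hs]
  rw [binEntropy_eq_negMulLog_add_negMulLog_one_sub,
    show 1 - a / (a + b) = b / (a + b) by field_simp; ring, hscale a, hscale b]
  field_simp
  ring

theorem mul_logb_add_mul_logb_add_two_mul_min_le {a b : ℝ} (ha : 0 ≤ a) (hb : 0 ≤ b) :
    a * logb 2 a + b * logb 2 b + 2 * min a b ≤ (a + b) * logb 2 (a + b) := by
  wlog hab : a ≤ b generalizing a b
  · simpa only [min_comm, add_comm, add_comm (b * _)] using this hb ha (le_of_not_ge hab)
  rcases ha.eq_or_lt with rfl | ha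
  · simp [hab]
  have hs : 0 < a + b := by linarith
  have hentropy : 2 * a * log 2 ≤ negMulLog a + negMulLog b - negMulLog (a + b) := by
    rw [← mul_binEntropy_div_add]
    calc 2 * a * log 2 = (a + b) * (2 * (a / (a + b)) * log 2) := by field_simp
      _ ≤ (a + b) * binEntropy (a / (a + b)) := by
        gcongr
        exact two_mul_mul_log_two_le_binEntropy (by positivity) (by rw [div_le_iff₀ hs]; linarith)
  have hgap : (a + b) * logb 2 (a + b) - (a * logb 2 a + b * logb 2 b + 2 * a) =
      (negMulLog a + negMulLog b - negMulLog (a + b) - 2 * a * log 2) / log 2 := by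
    simp only [logb, negMulLog]
    field_simp
    ring
  rw [min_eq_left hab, ← sub_nonneg, hgap]
  exact div_nonneg (by linarith) (log_nonneg one_le_two)

end Real

theorem card_interedges_cube_le (n : ℕ) (A : Finset (Fin n → Bool)) :
    (#((cube n).interedges A A) : ℝ) ≤ #A * logb 2 #A := by
  induction n with
  | zero =>
    have hempty : (cube 0).interedges A A = ∅ := by
      ext ⟨x, y⟩
      simp [SimpleGraph.mem_interedges_iff, Subsingleton.elim x y]
    rw [hempty, card_empty, Nat.cast_zero]
    exact mul_nonneg (Nat.cast_nonneg _) (div_nonneg (log_natCast_nonneg _) (log_nonneg one_le_two))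
  | succ n ih =>
    set A₀ := A.consPreimage false
    set A₁ := A.consPreimage true
    have hcard : (#A : ℝ) = #A₀ + #A₁ := by
      rw [card_eq_sum_card_consPreimage, Fintype.sum_bool, Nat.cast_add, add_comm]
    have hinter : (#(A₀ ∩ A₁) : ℝ) ≤ min (#A₀ : ℝ) #A₁ := by
      exact_mod_cast le_min (card_le_card inter_subset_left) (card_le_card inter_subset_right)
    rw [card_interedges_cube_succ, hcard]
    push_cast
    calc _ ≤ #A₀ * logb 2 #A₀ + #A₁ * logb 2 #A₁ + 2 * min (#A₀ : ℝ) #A₁ := by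
          gcongr
          exacts [ih A₀, ih A₁]
      _ ≤ _ := mul_logb_add_mul_logb_add_two_mul_min_le (by positivity) (by positivity)

/-- Edge-isoperimetric inequality for the hypercube: for any set `A` of vertices of `Q_n`,
the number of edges with both endpoints in `A` is at most `(1/2)·|A|·log₂|A|`. -/
theorem cube_isoperimetric (n : ℕ) (A : Finset (Fin n → Bool)) :
    (Set.ncard {e ∈ (cube n).edgeSet | ∀ x ∈ e, x ∈ A} : ℝ) ≤
      (1 / 2) * A.card * Real.logb 2 A.card := by
  have htwice : (2 * {e ∈ (cube n).edgeSet | ∀ x ∈ e, x ∈ A}.ncard : ℝ) =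
      #((cube n).interedges A A) := by
    exact_mod_cast (cube n).two_mul_ncard_edges_within A
  linarith [card_interedges_cube_le n A]
end

section
/- Azuma-type bound on merging: for the random interchange process on any finite graph with N vertices and i.i.d. uniform random edges, for every t ∈ ℕ and every δ ∈ (0,1), the probability that the t-th edge merges two distinct connected components satisfies P(M̃_t) ≤ N/t + t^{−(1−δ)/2} + exp(−t^δ/2). -/
open MeasureTheory
open scoped Classical

/-- The edges of `G`, as ordered pairs of adjacent vertices. -/
def EdgeT {V : Type*} (G : SimpleGraph V) : Type _ := {p : V × V // G.Adj p.1 p.2}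

instance {V : Type*} {G : SimpleGraph V} : MeasurableSpace (EdgeT G) := ⊤
instance {V : Type*} {G : SimpleGraph V} : MeasurableSingletonClass (EdgeT G) :=
  ⟨fun _ => trivial⟩
instance {V : Type*} [Finite V] {G : SimpleGraph V} : Finite (EdgeT G) :=
  inferInstanceAs (Finite {p : V × V // G.Adj p.1 p.2})

/-- The uniform probability measure on the edges of `G`. -/
noncomputable def unifEdge {V : Type*} [Fintype V] (G : SimpleGraph V) : Measure (EdgeT G) :=
  (Nat.card (EdgeT G) : ENNReal)⁻¹ • Measure.count

/-- The law of `t` i.i.d. edges, each uniform on the edges of `G`. -/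
noncomputable def seqMeasure {V : Type*} [Fintype V] (G : SimpleGraph V) (t : ℕ) :
    Measure (Fin t → EdgeT G) :=
  Measure.pi fun _ => unifEdge G

/-- The percolation graph with edge set `{e_1, …, e_m}`, the first `m` edges of `ω`. -/
def graphUpTo {V : Type*} {G : SimpleGraph V} {t : ℕ} (ω : Fin t → EdgeT G) (m : ℕ) :
    SimpleGraph V :=
  SimpleGraph.fromRel fun u v => ∃ i : Fin t, (i : ℕ) < m ∧
    ((ω i).1 = (u, v) ∨ (ω i).1 = (v, u))

open MeasureTheory Finset
open scoped ENNReal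

/-!
Let `p_i` be the probability that the `i`-th edge joins two components of the graph formed by
the earlier edges. Every merge lowers the number of components, so at most `N` merges occur along
any path and `∑ p_i ≤ N`. Swapping the `i`-th and `j`-th edges preserves the law of the sequence
and leaves the first `i` edges untouched, so for `i ≤ j`, `p_j` is at most the probability that
the `j`-th edge joins two components of the graph formed by the first `i` edges, which is `p_i`.
Hence `p_i` is non-increasing and `t p_t ≤ ∑_{i ≤ t} p_i ≤ N`.
-/

theorem Nat.card_filter_range_lt_add_le {c : ℕ → ℕ} (hc : Antitone c) (t : ℕ) :
    #{m ∈ range t | c (m + 1) < c m} + c t ≤ c 0 := by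
  induction t with
  | zero => simp
  | succ n ih =>
    rw [range_add_one, filter_insert]
    split_ifs with h
    · rw [card_insert_of_notMem (by simp)]
      omega
    · have : c (n + 1) ≤ c n := hc n.le_succ
      omega

theorem SimpleGraph.ConnectedComponent.card_lt_card_of_le_of_not_reachable {V : Type*} [Finite V]
    {H H' : SimpleGraph V} (h : H ≤ H') {u v : V} (huv : H'.Reachable u v)
    (hnot : ¬H.Reachable u v) :
    Nat.card H'.ConnectedComponent < Nat.card H.ConnectedComponent := by
  by_contra! hle
  have hinj := ((surjective_map_ofLE h).bijective_of_nat_card_le hle).injective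
  exact hnot (ConnectedComponent.exact (hinj (by simpa using ConnectedComponent.sound huv)))

theorem MeasureTheory.measurePreserving_comp_perm {ι α : Type*} [Fintype ι] [MeasurableSpace α]
    (ν : Measure α) [SigmaFinite ν] (σ : Equiv.Perm ι) :
    MeasurePreserving (fun ω : ι → α => ω ∘ σ) (Measure.pi fun _ => ν) (Measure.pi fun _ => ν) :=
  measurePreserving_arrowCongr' _ _ σ.symm (MeasurableEquiv.refl α) fun _ => .id ν

section Percolation

variable {V : Type*} {G : SimpleGraph V} {t : ℕ}

theorem graphUpTo_mono (ω : Fin t → EdgeT G) : Monotone (graphUpTo ω) := by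
  rintro m n hmn u v ⟨hne, ⟨i, hi, he⟩ | ⟨i, hi, he⟩⟩
  · exact ⟨hne, .inl ⟨i, hi.trans_le hmn, he⟩⟩
  · exact ⟨hne, .inr ⟨i, hi.trans_le hmn, he⟩⟩

theorem graphUpTo_succ_adj (ω : Fin t → EdgeT G) (i : Fin t) :
    (graphUpTo ω (i + 1)).Adj (ω i).1.1 (ω i).1.2 :=
  ⟨(ω i).2.ne, .inl ⟨i, Nat.lt_succ_self _, .inl rfl⟩⟩

theorem graphUpTo_congr {ω ω' : Fin t → EdgeT G} {m : ℕ}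
    (h : ∀ k : Fin t, (k : ℕ) < m → ω k = ω' k) : graphUpTo ω m = graphUpTo ω' m := by
  unfold graphUpTo
  congr 1
  ext u v
  constructor <;> rintro ⟨k, hk, he⟩ <;> exact ⟨k, hk, by simpa [h k hk] using he⟩

variable (G) in
/-- For `m = j` this is the merging event `M̃_{j+1}` (edges are indexed from `0`). -/
def separatedBefore (m : ℕ) (j : Fin t) : Set (Fin t → EdgeT G) :=
  {ω | ¬(graphUpTo ω m).Reachable (ω j).1.1 (ω j).1.2}

theorem separatedBefore_anti {m n : ℕ} (hmn : m ≤ n) (j : Fin t) :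
    separatedBefore G n j ⊆ separatedBefore G m j :=
  fun _ hω hreach => hω (hreach.mono (graphUpTo_mono _ hmn))

theorem card_filter_separatedBefore_self_le [Finite V] (ω : Fin t → EdgeT G) :
    #{i : Fin t | ω ∈ separatedBefore G i i} ≤ Nat.card V := by
  set c : ℕ → ℕ := fun m => Nat.card (graphUpTo ω m).ConnectedComponent
  have hc : Antitone c := fun m n hmn =>
    SimpleGraph.ConnectedComponent.card_le_card_of_le (graphUpTo_mono ω hmn)
  have hmerge : ∀ i ∈ ({i : Fin t | ω ∈ separatedBefore G i i} : Finset (Fin t)),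
      (i : ℕ) ∈ ({m ∈ range t | c (m + 1) < c m} : Finset ℕ) := by
    intro i hi
    simp only [mem_filter, mem_univ, true_and, mem_range] at hi ⊢
    exact ⟨i.2, SimpleGraph.ConnectedComponent.card_lt_card_of_le_of_not_reachable
      (graphUpTo_mono ω i.val.le_succ) (graphUpTo_succ_adj ω i).reachable hi⟩
  calc #{i : Fin t | ω ∈ separatedBefore G i i}
      ≤ #{m ∈ range t | c (m + 1) < c m} :=
        card_le_card_of_injOn _ hmerge Fin.val_injective.injOn
    _ ≤ c 0 := le_of_add_le_left (Nat.card_filter_range_lt_add_le hc t)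
    _ ≤ Nat.card V := Nat.card_le_card_of_surjective _ Quot.mk_surjective

variable [Fintype V]

theorem unifEdge_univ_le_one : unifEdge G Set.univ ≤ 1 := by
  rw [unifEdge, Measure.smul_apply, Measure.count_univ, ENat.card_eq_coe_natCard, smul_eq_mul,
    ENat.toENNReal_coe]
  exact ENNReal.inv_mul_le_one _

instance : IsFiniteMeasure (unifEdge G) :=
  ⟨unifEdge_univ_le_one.trans_lt ENNReal.one_lt_top⟩

theorem seqMeasure_univ_le_one : seqMeasure G t Set.univ ≤ 1 := by
  rw [seqMeasure, ← Set.pi_univ Set.univ, Measure.pi_pi]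
  exact prod_le_one' fun _ _ => unifEdge_univ_le_one

theorem sum_seqMeasure_separatedBefore_self_le :
    ∑ i : Fin t, seqMeasure G t (separatedBefore G i i) ≤ Fintype.card V := by
  have hpath (ω : Fin t → EdgeT G) :
      ∑ i : Fin t, (separatedBefore G i i).indicator 1 ω ≤ (Fintype.card V : ℝ≥0∞) := by
    simp only [Set.indicator_apply, Pi.one_apply, sum_boole, Nat.cast_le]
    simpa using card_filter_separatedBefore_self_le ω
  calc ∑ i : Fin t, seqMeasure G t (separatedBefore G i i)
      = ∫⁻ ω, ∑ i : Fin t, (separatedBefore G i i).indicator 1 ω ∂seqMeasure G t := by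
        rw [lintegral_finsetSum _ fun _ _ => .of_discrete]
        simp [lintegral_indicator_one .of_discrete]
    _ ≤ ∫⁻ _, (Fintype.card V : ℝ≥0∞) ∂seqMeasure G t := lintegral_mono hpath
    _ ≤ Fintype.card V := by
        simpa using mul_le_mul_right seqMeasure_univ_le_one (Fintype.card V : ℝ≥0∞)

theorem seqMeasure_separatedBefore_eq {i j : Fin t} (hij : i ≤ j) :
    seqMeasure G t (separatedBefore G i j) = seqMeasure G t (separatedBefore G i i) := by
  have hswap := measurePreserving_comp_perm (unifEdge G) (Equiv.swap i j)
  have hpre : (· ∘ Equiv.swap i j) ⁻¹' separatedBefore G i j = separatedBefore G i i := by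
    ext ω
    have hfix : graphUpTo (ω ∘ Equiv.swap i j) i = graphUpTo ω i :=
      graphUpTo_congr fun k hk => congrArg ω <| Equiv.swap_apply_of_ne_of_ne
        (Fin.ne_of_lt hk) (Fin.ne_of_lt (lt_of_lt_of_le hk hij))
    simp [separatedBefore, hfix]
  rw [← hpre]
  exact (hswap.measure_preimage MeasurableSet.of_discrete.nullMeasurableSet).symm

theorem seqMeasure_separatedBefore_self_anti {i j : Fin t} (hij : i ≤ j) :
    seqMeasure G t (separatedBefore G j j) ≤ seqMeasure G t (separatedBefore G i i) :=
  calc seqMeasure G t (separatedBefore G j j)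
      ≤ seqMeasure G t (separatedBefore G i j) := measure_mono (separatedBefore_anti hij j)
    _ = seqMeasure G t (separatedBefore G i i) := seqMeasure_separatedBefore_eq hij

theorem succ_mul_seqMeasure_separatedBefore_self_le (j : Fin t) :
    ((j + 1 : ℕ) : ℝ≥0∞) * seqMeasure G t (separatedBefore G j j) ≤ Fintype.card V :=
  calc ((j + 1 : ℕ) : ℝ≥0∞) * seqMeasure G t (separatedBefore G j j)
      = ∑ i ∈ Iic j, seqMeasure G t (separatedBefore G j j) := by simp
    _ ≤ ∑ i ∈ Iic j, seqMeasure G t (separatedBefore G i i) :=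
        sum_le_sum fun i hi => seqMeasure_separatedBefore_self_anti (mem_Iic.mp hi)
    _ ≤ ∑ i : Fin t, seqMeasure G t (separatedBefore G i i) :=
        sum_le_sum_of_subset (subset_univ _)
    _ ≤ Fintype.card V := sum_seqMeasure_separatedBefore_self_le

end Percolation

/-- Azuma-type bound on merging: in the random interchange process on a finite graph with
`N` vertices and i.i.d. uniform edges, for every `t ≥ 1` and `δ ∈ (0,1)`, the probability
`P(M̃_t)` that the `t`-th edge merges two distinct connected components of the graph formed
by the previous `t−1` edges satisfies `P(M̃_t) ≤ N/t + t^{−(1−δ)/2} + exp(−t^δ/2)`. -/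
theorem merge_prob_bound {V : Type*} [Fintype V] (G : SimpleGraph V)
    (t : ℕ) (ht : 1 ≤ t) (δ : ℝ) :
    (seqMeasure G t {ω : Fin t → EdgeT G |
        ¬(graphUpTo ω (t - 1)).Reachable (ω ⟨t - 1, by omega⟩).1.1
          (ω ⟨t - 1, by omega⟩).1.2}).toReal ≤
      (Fintype.card V : ℝ) / t + (t : ℝ) ^ (-(1 - δ) / 2) + Real.exp (-(t : ℝ) ^ δ / 2) := by
  set last : Fin t := ⟨t - 1, by omega⟩
  have hbound := succ_mul_seqMeasure_separatedBefore_self_le (G := G) last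
  rw [show (last : ℕ) + 1 = t by simp [last]; omega] at hbound
  have hmain : (seqMeasure G t (separatedBefore G last last)).toReal ≤ Fintype.card V / t := by
    rw [le_div_iff₀ (by exact_mod_cast ht), mul_comm]
    simpa using ENNReal.toReal_mono (by simp) hbound
  have hrpow : 0 ≤ (t : ℝ) ^ (-(1 - δ) / 2) := by positivity
  have hexp : 0 ≤ Real.exp (-(t : ℝ) ^ δ / 2) := by positivity
  change (seqMeasure G t (separatedBefore G last last)).toReal ≤ _
  linarith
end

section
/- Splitting–merging balance over a time window: for the random interchange process on a finite graph, for any T, L ∈ ℕ, Σ_{t=T+1}^{T+L} P(S_t) ≥ (1/2) Σ_{t=T+1}^{T+L} P(I_t) − (1/2) E(N_T − Ñ_T), where I_t = S_t ∪ M_t is the event that the endpoints of e_t lie in the same percolation cluster. -/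
open MeasureTheory
open scoped Classical

/-- The permutation `σ_m = τ_{e_m} ∘ ⋯ ∘ τ_{e_1}` obtained from the first `m` edges. -/
noncomputable def permUpTo {V : Type*} [DecidableEq V] {G : SimpleGraph V} {t : ℕ}
    (ω : Fin t → EdgeT G) (m : ℕ) : Equiv.Perm V :=
  ((List.ofFn fun i : Fin t => Equiv.swap (ω i).1.1 (ω i).1.2).take m).reverse.prod

/-- The `i`-th edge (0-based) of the sequence `ω`, as a pair of vertices. -/
noncomputable def getEdge {V : Type*} [Nonempty V] {G : SimpleGraph V} {t : ℕ}
    (ω : Fin t → EdgeT G) (i : ℕ) : V × V :=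
  if h : i < t then (ω ⟨i, h⟩).1 else (Classical.arbitrary V, Classical.arbitrary V)

/-- The number of cycles of a permutation (counting fixed points as cycles). -/
noncomputable def numCycles {α : Type*} (σ : Equiv.Perm α) : ℕ :=
  Set.ncard {s : Set α | ∃ x, s = {y | σ.SameCycle x y}}

/-!
Write `D_t = N_t − Ñ_t`. Along a single step, `D_t − D_{t−1} ≤ 2·1_{S_t} − 1_{I_t}`: a split raises
`N` by one and keeps `Ñ`, a merge inside a cluster lowers `N` by one and keeps `Ñ`, and a merge
across clusters lowers both by one. Summing over the window and using
`D_{T+L} ≥ 0` (every cycle of `σ_t` lies inside a cluster) gives the inequality pointwise in the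
edge sequence; it then survives taking expectations.

Both counting facts come from one principle: if an equivalence relation is obtained from a finer
one by merging the classes of two points `a` and `b`, the number of classes drops by one, or by
none when `a` and `b` were already related. Adding the edge `ab` merges clusters in this way, and
of the cycle partitions of `σ` and of `(a b) σ`, the coarser is obtained from the finer by merging
at `a` and `b`.
-/

/-- When `r` is an equivalence relation, the equivalence relation generated by `r` and `a ~ b`. -/
def joinRel {α : Type*} (r : α → α → Prop) (a b : α) (x y : α) : Prop :=
  r x y ∨ (r x a ∧ r b y) ∨ (r x b ∧ r a y)

section Equivalence

variable {α : Type*} {r : α → α → Prop}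

theorem Equivalence.joinRel (hr : Equivalence r) (a b : α) : Equivalence (joinRel r a b) := by
  refine ⟨fun x => .inl (hr.refl x), ?_, ?_⟩
  · rintro x y (h | ⟨h₁, h₂⟩ | ⟨h₁, h₂⟩)
    · exact .inl (hr.symm h)
    · exact .inr (.inr ⟨hr.symm h₂, hr.symm h₁⟩)
    · exact .inr (.inl ⟨hr.symm h₂, hr.symm h₁⟩)
  · rintro x y z (h | ⟨h₁, h₂⟩ | ⟨h₁, h₂⟩) (g | ⟨g₁, g₂⟩ | ⟨g₁, g₂⟩) <;>
      first
      | exact .inl (hr.trans h g)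
      | exact .inr (.inl ⟨hr.trans h g₁, g₂⟩)
      | exact .inr (.inr ⟨hr.trans h g₁, g₂⟩)
      | exact .inr (.inl ⟨h₁, hr.trans h₂ g⟩)
      | exact .inr (.inr ⟨h₁, hr.trans h₂ g⟩)
      | exact .inl (hr.trans h₁ g₂)
      | exact .inl (hr.trans h₁ (hr.trans (hr.symm (hr.trans h₂ g₁)) g₂))

theorem Equivalence.rel_of_joinRel (hr : Equivalence r) {a b x y : α} (hab : r a b)
    (h : _root_.joinRel r a b x y) : r x y := by
  rcases h with h | ⟨h₁, h₂⟩ | ⟨h₁, h₂⟩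
  · exact h
  · exact hr.trans h₁ (hr.trans hab h₂)
  · exact hr.trans h₁ (hr.trans (hr.symm hab) h₂)

end Equivalence

namespace Setoid

variable {α : Type*} {s s' : Setoid α} {a b : α}

theorem map_of_le_surjective (h : s ≤ s') : Function.Surjective (map_of_le h) :=
  fun q => q.inductionOn fun x => ⟨Quotient.mk s x, rfl⟩

variable [Finite α]

theorem card_quotient_le_of_le (h : s ≤ s') : Nat.card (Quotient s') ≤ Nat.card (Quotient s) :=
  Nat.card_le_card_of_surjective _ (map_of_le_surjective h)

theorem card_quotient_add_one_le (h : s ≤ s') (hab : s' a b) (hnab : ¬ s a b) :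
    Nat.card (Quotient s') + 1 ≤ Nat.card (Quotient s) := by
  have := Fintype.ofFinite (Quotient s)
  have := Fintype.ofFinite (Quotient s')
  simp only [Nat.card_eq_fintype_card]
  refine Fintype.card_lt_of_surjective_not_injective _ (map_of_le_surjective h) fun hinj => ?_
  exact hnab (Quotient.exact (@hinj (Quotient.mk s a) (Quotient.mk s b) (Quotient.sound hab)))

theorem card_quotient_le_add_one (h : s ≤ s') (hjoin : ∀ x y, s' x y → joinRel s a b x y) :
    Nat.card (Quotient s) ≤ Nat.card (Quotient s') + 1 := by
  -- outside the class of `b`, the map to `Quotient s'` is injective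
  let f : Quotient s → Option (Quotient s') := fun q =>
    if q = Quotient.mk s b then none else some (map_of_le h q)
  have hf : Function.Injective f := by
    intro p q hpq
    induction p using Quotient.inductionOn with | h x =>
    induction q using Quotient.inductionOn with | h y =>
    by_cases hx : Quotient.mk s x = Quotient.mk s b <;>
      by_cases hy : Quotient.mk s y = Quotient.mk s b <;>
      simp only [f, hx, hy, if_true, if_false, reduceCtorEq, Option.some_inj] at hpq
    · rw [hx, hy]
    · rcases hjoin x y (Quotient.exact hpq) with hxy | ⟨-, hby⟩ | ⟨hxb, -⟩
      · exact Quotient.sound hxy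
      · exact absurd (Quotient.sound (s.symm hby)) hy
      · exact absurd (Quotient.sound hxb) hx
  calc Nat.card (Quotient s) ≤ Nat.card (Option (Quotient s')) :=
        Nat.card_le_card_of_injective f hf
    _ = Nat.card (Quotient s') + 1 := Finite.card_option

end Setoid

theorem numCycles_eq_card_quotient {α : Type*} (σ : Equiv.Perm α) :
    numCycles σ = Nat.card (Quotient (Equiv.Perm.SameCycle.setoid σ)) := by
  have hclasses : {s : Set α | ∃ x, s = {y | σ.SameCycle x y}}
      = (Equiv.Perm.SameCycle.setoid σ).classes := by
    ext s
    constructor <;>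
    · rintro ⟨x, rfl⟩
      exact ⟨x, by ext z; exact Equiv.Perm.sameCycle_comm⟩
  rw [numCycles, hclasses, ← Nat.card_coe_set_eq,
    Nat.card_congr (Setoid.quotientEquivClasses (Equiv.Perm.SameCycle.setoid σ))]

namespace Equiv.Perm

variable {α : Type*} {σ : Perm α} {a b : α}

theorem SameCycle.rel_of_equivalence {r : α → α → Prop} (hr : Equivalence r)
    (hσ : ∀ x, r x (σ x)) {x y : α} (h : σ.SameCycle x y) : r x y := by
  have pow_rel : ∀ (n : ℕ) (x : α), r x ((σ ^ n) x) := by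
    intro n
    induction n with
    | zero => exact hr.refl
    | succ n ih =>
      exact fun x => hr.trans (ih x) (by rw [pow_succ', mul_apply]; exact hσ _)
  obtain ⟨i, rfl⟩ := h
  obtain ⟨n, rfl | rfl⟩ := i.eq_nat_or_neg
  · simpa using pow_rel n x
  · simpa using hr.symm (pow_rel n ((σ ^ (-(n : ℤ))) x))

variable [DecidableEq α]

theorem SameCycle.joinRel_swap_mul {x y : α} (h : σ.SameCycle x y) :
    joinRel (swap a b * σ).SameCycle a b x y := by
  refine h.rel_of_equivalence ((SameCycle.equivalence _).joinRel a b) fun x => ?_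
  have hx : (swap a b * σ).SameCycle x ((swap a b * σ) x) :=
    sameCycle_apply_right.2 (.refl _ _)
  have hσx : σ x = swap a b ((swap a b * σ) x) := by simp
  rw [hσx]
  by_cases ha : (swap a b * σ) x = a
  · rw [ha] at hx ⊢
    rw [swap_apply_left]
    exact .inr (.inl ⟨hx, .refl _ _⟩)
  by_cases hb : (swap a b * σ) x = b
  · rw [hb] at hx ⊢
    rw [swap_apply_right]
    exact .inr (.inr ⟨hx, .refl _ _⟩)
  rw [swap_apply_of_ne_of_ne ha hb]
  exact .inl hx

theorem SameCycle.joinRel_of_swap_mul {x y : α} (h : (swap a b * σ).SameCycle x y) :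
    joinRel σ.SameCycle a b x y := by
  simpa only [swap_mul_self_mul] using h.joinRel_swap_mul (a := a) (b := b)

variable [Finite α]

theorem sameCycle_swap_mul_of_not_sameCycle (h : ¬σ.SameCycle a b) :
    (swap a b * σ).SameCycle a b := by
  -- Until its first return to `a`, the `σ`-orbit of `a` avoids `a` and `b`, where `swap a b * σ`
  -- agrees with `σ`; the returning step is sent to `b` instead.
  have hex : ∃ k, 0 < k ∧ (σ ^ k) a = a :=
    ⟨orderOf σ, orderOf_pos σ, by rw [pow_orderOf_eq_one, one_apply]⟩
  obtain ⟨hk, hka⟩ := Nat.find_spec hex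
  obtain ⟨k, hk_eq⟩ : ∃ k, Nat.find hex = k + 1 := Nat.exists_eq_add_one.2 hk
  have agree : ∀ j ≤ k, ((swap a b * σ) ^ j) a = (σ ^ j) a := by
    intro j
    induction j with
    | zero => simp
    | succ j ih =>
      intro hj
      have hne_a : (σ ^ (j + 1)) a ≠ a := fun he => Nat.find_min hex (by omega) ⟨by omega, he⟩
      have hne_b : (σ ^ (j + 1)) a ≠ b :=
        fun he => h ⟨(j + 1 : ℕ), by rw [zpow_natCast]; exact he⟩
      rw [pow_succ', mul_apply, ih (by omega), mul_apply, ← mul_apply σ, ← pow_succ',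
        swap_apply_of_ne_of_ne hne_a hne_b]
  refine ⟨(k + 1 : ℕ), ?_⟩
  rw [zpow_natCast, pow_succ', mul_apply, agree k le_rfl, mul_apply, ← mul_apply σ, ← pow_succ',
    ← hk_eq, hka, swap_apply_left]

theorem numCycles_swap_mul_le (h : σ.SameCycle a b) :
    numCycles (swap a b * σ) ≤ numCycles σ + 1 := by
  rw [numCycles_eq_card_quotient, numCycles_eq_card_quotient]
  exact Setoid.card_quotient_le_add_one
    (fun _ _ hxy => (SameCycle.equivalence σ).rel_of_joinRel h hxy.joinRel_of_swap_mul)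
    fun _ _ hxy => hxy.joinRel_swap_mul

theorem numCycles_swap_mul_add_one_le (h : ¬σ.SameCycle a b) :
    numCycles (swap a b * σ) + 1 ≤ numCycles σ := by
  rw [numCycles_eq_card_quotient, numCycles_eq_card_quotient]
  have hab := sameCycle_swap_mul_of_not_sameCycle h
  exact Setoid.card_quotient_add_one_le
    (fun _ _ hxy => (SameCycle.equivalence _).rel_of_joinRel hab hxy.joinRel_swap_mul) hab h

end Equiv.Perm

namespace SimpleGraph

variable {V : Type*} {H : SimpleGraph V} {a b : V}

theorem reachable_swap_apply_edge [DecidableEq V] (a b x : V) :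
    (edge a b).Reachable x (Equiv.swap a b x) := by
  rcases eq_or_ne a b with rfl | hab
  · simp
  have hadj : (edge a b).Adj a b := (edge_adj ..).2 ⟨.inl ⟨rfl, rfl⟩, hab⟩
  rw [Equiv.swap_apply_def]
  split_ifs with hxa hxb
  · exact hxa ▸ hadj.reachable
  · exact hxb ▸ hadj.symm.reachable
  · rfl

theorem Reachable.rel_of_equivalence {r : V → V → Prop} (hr : Equivalence r)
    (hadj : ∀ ⦃u v⦄, H.Adj u v → r u v) {u v : V} (h : H.Reachable u v) : r u v := by
  rw [reachable_iff_reflTransGen] at h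
  induction h with
  | refl => exact hr.refl _
  | tail _ huv ih => exact hr.trans ih (hadj huv)

theorem Reachable.joinRel_of_sup_edge {u v : V} (h : (H ⊔ edge a b).Reachable u v) :
    joinRel H.Reachable a b u v := by
  refine h.rel_of_equivalence (H.reachable_is_equivalence.joinRel a b) fun x y hxy => ?_
  rw [sup_adj, edge_adj] at hxy
  rcases hxy with hxy | ⟨⟨rfl, rfl⟩ | ⟨rfl, rfl⟩, -⟩
  · exact .inl hxy.reachable
  · exact .inr (.inl ⟨.refl _, .refl _⟩)
  · exact .inr (.inr ⟨.refl _, .refl _⟩)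

variable [Finite V]

theorem card_connectedComponent_le_sup_edge_add_one :
    Nat.card H.ConnectedComponent ≤ Nat.card (H ⊔ edge a b).ConnectedComponent + 1 :=
  Setoid.card_quotient_le_add_one (s := H.reachableSetoid)
    (s' := (H ⊔ edge a b).reachableSetoid) (fun _ _ h => h.mono le_sup_left)
    fun _ _ h => h.joinRel_of_sup_edge

theorem card_connectedComponent_sup_edge_of_reachable (h : H.Reachable a b) :
    Nat.card (H ⊔ edge a b).ConnectedComponent = Nat.card H.ConnectedComponent :=
  le_antisymm (ConnectedComponent.card_le_card_of_le le_sup_left)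
    (Setoid.card_quotient_le_of_le (s := (H ⊔ edge a b).reachableSetoid)
      (s' := H.reachableSetoid) fun _ _ huv =>
        H.reachable_is_equivalence.rel_of_joinRel h huv.joinRel_of_sup_edge)

end SimpleGraph

section InterchangeProcess

open Equiv SimpleGraph

variable {V : Type*} {G : SimpleGraph V} {t : ℕ} (ω : Fin t → EdgeT G)

theorem permUpTo_zero [DecidableEq V] : permUpTo ω 0 = 1 := by
  simp [permUpTo]

theorem permUpTo_succ [DecidableEq V] {m : ℕ} (h : m < t) :
    permUpTo ω (m + 1) = swap (ω ⟨m, h⟩).1.1 (ω ⟨m, h⟩).1.2 * permUpTo ω m := by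
  have hlen : m < (List.ofFn fun i : Fin t => swap (ω i).1.1 (ω i).1.2).length := by simpa using h
  rw [permUpTo, permUpTo, List.take_add_one, List.getElem?_eq_getElem hlen, List.getElem_ofFn]
  simp [List.reverse_append]

theorem graphUpTo_succ {m : ℕ} (h : m < t) :
    graphUpTo ω (m + 1) = graphUpTo ω m ⊔ edge (ω ⟨m, h⟩).1.1 (ω ⟨m, h⟩).1.2 := by
  ext u v
  simp only [graphUpTo, fromRel_adj, sup_adj, edge_adj, Nat.lt_succ_iff_lt_or_eq]
  grind

theorem reachable_permUpTo_apply [DecidableEq V] {m : ℕ} (hm : m ≤ t) (x : V) :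
    (graphUpTo ω m).Reachable x (permUpTo ω m x) := by
  induction m with
  | zero => rw [permUpTo_zero, Perm.one_apply]
  | succ m ih =>
    have h : m < t := hm
    rw [permUpTo_succ ω h, graphUpTo_succ ω h, Perm.mul_apply]
    exact ((ih h.le).mono le_sup_left).trans ((reachable_swap_apply_edge _ _ _).mono le_sup_right)

theorem reachable_of_sameCycle_permUpTo [DecidableEq V] {m : ℕ} (hm : m ≤ t) {x y : V}
    (h : (permUpTo ω m).SameCycle x y) : (graphUpTo ω m).Reachable x y :=
  h.rel_of_equivalence (graphUpTo ω m).reachable_is_equivalence (reachable_permUpTo_apply ω hm)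

theorem card_connectedComponent_graphUpTo_le_numCycles [Finite V] [DecidableEq V] {m : ℕ}
    (hm : m ≤ t) : Nat.card (graphUpTo ω m).ConnectedComponent ≤ numCycles (permUpTo ω m) := by
  rw [numCycles_eq_card_quotient]
  exact Setoid.card_quotient_le_of_le (s' := (graphUpTo ω m).reachableSetoid)
    fun _ _ h => reachable_of_sameCycle_permUpTo ω hm h

/-- The quantity `N_m − Ñ_m`. -/
noncomputable def cycleExcess [DecidableEq V] (m : ℕ) : ℝ :=
  numCycles (permUpTo ω m) - Nat.card (graphUpTo ω m).ConnectedComponent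

theorem cycleExcess_nonneg [Finite V] [DecidableEq V] {m : ℕ} (hm : m ≤ t) :
    0 ≤ cycleExcess ω m :=
  sub_nonneg.2 (mod_cast card_connectedComponent_graphUpTo_le_numCycles ω hm)

variable (G t) in
/-- The event `S_{m+1}`: the edge `e_{m+1}`, stored at index `m`, joins two points of one cycle
of `σ_m`. -/
def splitEvent [DecidableEq V] [Nonempty V] (m : ℕ) : Set (Fin t → EdgeT G) :=
  {ω | (permUpTo ω m).SameCycle (getEdge ω m).1 (getEdge ω m).2}

variable (G t) in
/-- The event `I_{m+1}`: the edge `e_{m+1}` joins two points of one cluster of the percolation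
graph of `e_1, …, e_m`. -/
def clusterEvent [Nonempty V] (m : ℕ) : Set (Fin t → EdgeT G) :=
  {ω | (graphUpTo ω m).Reachable (getEdge ω m).1 (getEdge ω m).2}

theorem cycleExcess_succ_le [Finite V] [DecidableEq V] [Nonempty V] {m : ℕ} (h : m < t) :
    cycleExcess ω (m + 1) ≤ cycleExcess ω m + 2 * (splitEvent G t m).indicator 1 ω
      - (clusterEvent G t m).indicator 1 ω := by
  have hedge : getEdge ω m = ((ω ⟨m, h⟩).1.1, (ω ⟨m, h⟩).1.2) := dif_pos h
  simp only [cycleExcess, splitEvent, clusterEvent, Set.indicator_apply, Set.mem_ofPred_eq,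
    Pi.one_apply, hedge, permUpTo_succ ω h, graphUpTo_succ ω h]
  set a := (ω ⟨m, h⟩).1.1
  set b := (ω ⟨m, h⟩).1.2
  have hcc : (Nat.card (graphUpTo ω m).ConnectedComponent : ℝ)
      ≤ Nat.card (graphUpTo ω m ⊔ edge a b).ConnectedComponent + 1 :=
    mod_cast card_connectedComponent_le_sup_edge_add_one
  by_cases hS : (permUpTo ω m).SameCycle a b
  · have hI := reachable_of_sameCycle_permUpTo ω h.le hS
    have hN : (numCycles (swap a b * permUpTo ω m) : ℝ) ≤ numCycles (permUpTo ω m) + 1 :=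
      mod_cast Perm.numCycles_swap_mul_le hS
    rw [if_pos hS, if_pos hI, card_connectedComponent_sup_edge_of_reachable hI]
    linarith
  · have hN : (numCycles (swap a b * permUpTo ω m) : ℝ) + 1 ≤ numCycles (permUpTo ω m) :=
      mod_cast Perm.numCycles_swap_mul_add_one_le hS
    rw [if_neg hS]
    split_ifs with hI
    · rw [card_connectedComponent_sup_edge_of_reachable hI]
      linarith
    · linarith

theorem le_sum_indicator_splitEvent [Finite V] [DecidableEq V] [Nonempty V] {T n : ℕ}
    (hT : T ≤ n) (hn : n ≤ t) :
    (1 / 2 : ℝ) * ∑ m ∈ Finset.Ico T n, (clusterEvent G t m).indicator 1 ω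
        - (1 / 2) * cycleExcess ω T
      ≤ ∑ m ∈ Finset.Ico T n, (splitEvent G t m).indicator 1 ω := by
  have htelescope : cycleExcess ω n - cycleExcess ω T ≤ ∑ m ∈ Finset.Ico T n,
      (2 * (splitEvent G t m).indicator 1 ω - (clusterEvent G t m).indicator 1 ω) := by
    rw [← Finset.sum_Ico_sub _ hT]
    refine Finset.sum_le_sum fun m hm => ?_
    have := cycleExcess_succ_le ω (m := m) (by simp at hm; omega)
    linarith
  rw [Finset.sum_sub_distrib, ← Finset.mul_sum] at htelescope
  linarith [cycleExcess_nonneg ω hn]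

end InterchangeProcess

instance isFiniteMeasure_unifEdge {V : Type*} [Fintype V] (G : SimpleGraph V) :
    IsFiniteMeasure (unifEdge G) := by
  refine ⟨lt_of_le_of_lt ?_ ENNReal.one_lt_top⟩
  rw [unifEdge, Measure.smul_apply, smul_eq_mul, Measure.count_univ, ENat.card_eq_coe_natCard]
  exact ENNReal.inv_mul_le_one _

instance isFiniteMeasure_seqMeasure {V : Type*} [Fintype V] (G : SimpleGraph V) (t : ℕ) :
    IsFiniteMeasure (seqMeasure G t) := by
  rw [seqMeasure]
  infer_instance

theorem sum_measureReal_eq_integral_sum_indicator {Ω ι : Type*} [MeasurableSpace Ω]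
    {μ : Measure Ω} [IsFiniteMeasure μ] (s : Finset ι) {A : ι → Set Ω}
    (hA : ∀ i ∈ s, MeasurableSet (A i)) :
    ∑ i ∈ s, μ.real (A i) = ∫ ω, ∑ i ∈ s, (A i).indicator 1 ω ∂μ := by
  rw [integral_finsetSum s fun i hi => (integrable_const 1).indicator (hA i hi)]
  exact Finset.sum_congr rfl fun i hi => (integral_indicator_one (hA i hi)).symm

/-- Splitting–merging balance over a time window (Lemma 3.8): for the random interchange
process on a finite graph with i.i.d. uniform edges,
`Σ_{t=T+1}^{T+L} P(S_t) ≥ (1/2) Σ_{t=T+1}^{T+L} P(I_t) − (1/2) E(N_T − Ñ_T)`,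
where `S_t` is the event that the endpoints of the `t`-th edge lie in the same cycle of
`σ_{t−1}`, `I_t` the event that they lie in the same percolation cluster, `N_T` the number
of cycles of `σ_T` and `Ñ_T` the number of connected components after `T` edges. -/
theorem split_merge_balance {V : Type*} [Fintype V] [DecidableEq V] [Nonempty V]
    (G : SimpleGraph V) (T L : ℕ) :
    ∑ t ∈ Finset.Ico (T + 1) (T + L + 1),
        (seqMeasure G (T + L) {ω : Fin (T + L) → EdgeT G |
          (permUpTo ω (t - 1)).SameCycle (getEdge ω (t - 1)).1 (getEdge ω (t - 1)).2}).toReal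
      ≥ (1 / 2) * ∑ t ∈ Finset.Ico (T + 1) (T + L + 1),
          (seqMeasure G (T + L) {ω : Fin (T + L) → EdgeT G |
            (graphUpTo ω (t - 1)).Reachable (getEdge ω (t - 1)).1 (getEdge ω (t - 1)).2}).toReal
        - (1 / 2) * ∫ ω, ((numCycles (permUpTo ω T) : ℝ)
            - (Nat.card (graphUpTo ω T).ConnectedComponent : ℝ))
            ∂(seqMeasure G (T + L)) := by
  set μ := seqMeasure G (T + L)
  have hmeas : ∀ A : Set (Fin (T + L) → EdgeT G), MeasurableSet A :=
    fun A => A.toFinite.measurableSet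
  have hbalance : (1 / 2) * ∑ m ∈ Finset.Ico T (T + L), μ.real (clusterEvent G (T + L) m)
        - (1 / 2) * ∫ ω, cycleExcess ω T ∂μ
      ≤ ∑ m ∈ Finset.Ico T (T + L), μ.real (splitEvent G (T + L) m) := by
    rw [sum_measureReal_eq_integral_sum_indicator _ fun m _ => hmeas _,
      sum_measureReal_eq_integral_sum_indicator _ fun m _ => hmeas _,
      ← integral_const_mul, ← integral_const_mul, ← integral_sub .of_finite .of_finite]
    exact integral_mono .of_finite .of_finite fun ω =>
      le_sum_indicator_splitEvent ω (Nat.le_add_right T L) le_rfl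
  rw [ge_iff_le, ← Finset.sum_Ico_add', ← Finset.sum_Ico_add']
  simp only [Nat.add_sub_cancel]
  exact hbalance
end
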